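/- Let N ≥ 1 and let ψ_j, φ_j : ℝ² → ℝ^N (j ∈ ℤ) be smooth functions of (x, z) such that ⟨ψ_{j-1},φ_j⟩ ≠ 1 everywhere for every j, and such that for every j the lattice equations hold: ∂_x ψ_j = ψ_{j+1} + ⟨ψ_j,φ_j⟩ψ_j, −∂_x φ_j = φ_{j-1} + ⟨ψ_j,φ_j⟩φ_j, ∂_z ψ_j = ψ_{j-1}/(⟨ψ_{j-1},φ_j⟩ − 1), −∂_z φ_j = φ_{j+1}/(⟨ψ_j,φ_{j+1}⟩ − 1). Then for every j the pair (ψ_j, φ_j) satisfies the hyperbolic system ψ_{j,xz} = ⟨ψ_j,φ_j⟩∂_z ψ_j + (⟨∂_z ψ_j,φ_j⟩ − 1)ψ_j and φ_{j,xz} = −⟨ψ_j,φ_j⟩∂_z φ_j − (⟨ψ_j,∂_z φ_j⟩ + 1)φ_j. -/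

import Mathlib

noncomputable def pdx {V : Type*} [NormedAddCommGroup V] [NormedSpace ℝ V]
    (f : ℝ → ℝ → V) : ℝ → ℝ → V :=
  fun x y => deriv (fun s => f s y) x

noncomputable def pdz {V : Type*} [NormedAddCommGroup V] [NormedSpace ℝ V]
    (f : ℝ → ℝ → V) : ℝ → ℝ → V :=
  fun x y => deriv (fun s => f x s) y

def dot {N : ℕ} (a b : Fin N → ℝ) : ℝ := ∑ i, a i * b i

lemma dot_smul_right' {N : ℕ} (a b : Fin N → ℝ) (c : ℝ) :
    dot a (c • b) = c * dot a b := by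
  simp [dot, Finset.mul_sum, mul_comm, mul_left_comm]

lemma dot_smul_left' {N : ℕ} (a b : Fin N → ℝ) (c : ℝ) :
    dot (c • a) b = c * dot a b := by
  simp [dot, Finset.mul_sum, mul_comm, mul_left_comm]

lemma dot_neg_right' {N : ℕ} (a b : Fin N → ℝ) :
    dot a (-b) = -dot a b := by
  simp [dot]

lemma hasDerivAt_slice_z {N : ℕ} (f : ℝ → ℝ → (Fin N → ℝ))
    (hf : ContDiff ℝ (⊤ : ℕ∞) (fun p : ℝ × ℝ => f p.1 p.2)) (x z : ℝ) :
    HasDerivAt (fun s => f x s) (pdz f x z) z := by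
  have h : Differentiable ℝ (fun s : ℝ => f x s) := by
    have h1 : Differentiable ℝ (fun p : ℝ × ℝ => f p.1 p.2) := hf.differentiable (by simp)
    exact h1.comp ((differentiable_const x).prodMk differentiable_id)
  exact (h z).hasDerivAt

lemma hasDerivAt_dot_slice_z {N : ℕ} (f g : ℝ → ℝ → (Fin N → ℝ))
    (hf : ContDiff ℝ (⊤ : ℕ∞) (fun p : ℝ × ℝ => f p.1 p.2))
    (hg : ContDiff ℝ (⊤ : ℕ∞) (fun p : ℝ × ℝ => g p.1 p.2)) (x z : ℝ) :
    HasDerivAt (fun s => dot (f x s) (g x s))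
      (dot (pdz f x z) (g x z) + dot (f x z) (pdz g x z)) z := by
  have hf' := hasDerivAt_pi.1 (hasDerivAt_slice_z f hf x z)
  have hg' := hasDerivAt_pi.1 (hasDerivAt_slice_z g hg x z)
  have h : HasDerivAt (fun s => ∑ i, f x s i * g x s i)
      (∑ i, ((pdz f x z) i * g x z i + f x z i * (pdz g x z) i)) z :=
    HasDerivAt.fun_sum fun i _ => (hf' i).mul (hg' i)
  simpa [dot, Finset.sum_add_distrib] using h

theorem lattice_pair_gives_hyperbolic_system (N : ℕ) (hN : 1 ≤ N)
    (ψ φ : ℤ → ℝ → ℝ → (Fin N → ℝ))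
    (hψ : ∀ j, ContDiff ℝ (⊤ : ℕ∞) (fun p : ℝ × ℝ => ψ j p.1 p.2))
    (hφ : ∀ j, ContDiff ℝ (⊤ : ℕ∞) (fun p : ℝ × ℝ => φ j p.1 p.2))
    (hne : ∀ j x z, dot (ψ (j - 1) x z) (φ j x z) ≠ 1)
    (hLat₁ : ∀ j x z, pdx (ψ j) x z =
      ψ (j + 1) x z + dot (ψ j x z) (φ j x z) • ψ j x z)
    (hLat₂ : ∀ j x z, -pdx (φ j) x z =
      φ (j - 1) x z + dot (ψ j x z) (φ j x z) • φ j x z)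
    (hLat₃ : ∀ j x z, pdz (ψ j) x z =
      (dot (ψ (j - 1) x z) (φ j x z) - 1)⁻¹ • ψ (j - 1) x z)
    (hLat₄ : ∀ j x z, -pdz (φ j) x z =
      (dot (ψ j x z) (φ (j + 1) x z) - 1)⁻¹ • φ (j + 1) x z) :
    ∀ j x z,
      pdz (pdx (ψ j)) x z =
        dot (ψ j x z) (φ j x z) • pdz (ψ j) x z
          + (dot (pdz (ψ j) x z) (φ j x z) - 1) • ψ j x z ∧
      pdz (pdx (φ j)) x z =
        -(dot (ψ j x z) (φ j x z)) • pdz (φ j) x z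
          - (dot (ψ j x z) (pdz (φ j) x z) + 1) • φ j x z := by
  intro j x z
  -- basic derivative facts
  have hψslice : ∀ k, HasDerivAt (fun s => ψ k x s) (pdz (ψ k) x z) z :=
    fun k => hasDerivAt_slice_z (ψ k) (hψ k) x z
  have hφslice : ∀ k, HasDerivAt (fun s => φ k x s) (pdz (φ k) x z) z :=
    fun k => hasDerivAt_slice_z (φ k) (hφ k) x z
  have hdot : HasDerivAt (fun s => dot (ψ j x s) (φ j x s))
      (dot (pdz (ψ j) x z) (φ j x z) + dot (ψ j x z) (pdz (φ j) x z)) z :=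
    hasDerivAt_dot_slice_z (ψ j) (φ j) (hψ j) (hφ j) x z
  -- pdz of pdx ψ j
  have hψkey : pdz (pdx (ψ j)) x z =
      pdz (ψ (j + 1)) x z +
        (dot (ψ j x z) (φ j x z) • pdz (ψ j) x z
          + (dot (pdz (ψ j) x z) (φ j x z) + dot (ψ j x z) (pdz (φ j) x z)) • ψ j x z) := by
    have hfun : (fun s => pdx (ψ j) x s) =
        fun s => ψ (j + 1) x s + dot (ψ j x s) (φ j x s) • ψ j x s :=
      funext fun s => hLat₁ j x s
    have h : HasDerivAt (fun s => pdx (ψ j) x s)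
        (pdz (ψ (j + 1)) x z +
          (dot (ψ j x z) (φ j x z) • pdz (ψ j) x z
            + (dot (pdz (ψ j) x z) (φ j x z) + dot (ψ j x z) (pdz (φ j) x z)) • ψ j x z)) z := by
      rw [hfun]
      exact (hψslice (j + 1)).add (hdot.smul (hψslice j))
    exact h.deriv
  have hφkey : pdz (pdx (φ j)) x z =
      -(pdz (φ (j - 1)) x z +
        (dot (ψ j x z) (φ j x z) • pdz (φ j) x z
          + (dot (pdz (ψ j) x z) (φ j x z) + dot (ψ j x z) (pdz (φ j) x z)) • φ j x z)) := by
    have hfun : (fun s => pdx (φ j) x s) =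
        fun s => -(φ (j - 1) x s + dot (ψ j x s) (φ j x s) • φ j x s) :=
      funext fun s => neg_eq_iff_eq_neg.mp (hLat₂ j x s)
    have h : HasDerivAt (fun s => pdx (φ j) x s)
        (-(pdz (φ (j - 1)) x z +
          (dot (ψ j x z) (φ j x z) • pdz (φ j) x z
            + (dot (pdz (ψ j) x z) (φ j x z) + dot (ψ j x z) (pdz (φ j) x z)) • φ j x z))) z := by
      rw [hfun]
      exact ((hφslice (j - 1)).add (hdot.smul (hφslice j))).neg
    exact h.deriv
  constructor
  · -- ψ equation
    have hd1 : dot (ψ j x z) (φ (j + 1) x z) ≠ 1 := by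
      have := hne (j + 1) x z
      rwa [show j + 1 - 1 = j by ring] at this
    have hd : dot (ψ j x z) (φ (j + 1) x z) - 1 ≠ 0 := sub_ne_zero.mpr hd1
    have h3 : pdz (ψ (j + 1)) x z =
        (dot (ψ j x z) (φ (j + 1) x z) - 1)⁻¹ • ψ j x z := by
      have := hLat₃ (j + 1) x z
      rwa [show j + 1 - 1 = j by ring] at this
    have h4 : pdz (φ j) x z =
        -((dot (ψ j x z) (φ (j + 1) x z) - 1)⁻¹ • φ (j + 1) x z) :=
      neg_eq_iff_eq_neg.mp (hLat₄ j x z)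
    rw [hψkey, h3, h4, dot_neg_right', dot_smul_right']
    match_scalars
    · field_simp
      ring
    · ring
  · -- φ equation
    have he1 : dot (ψ (j - 1) x z) (φ j x z) ≠ 1 := hne j x z
    have he : dot (ψ (j - 1) x z) (φ j x z) - 1 ≠ 0 := sub_ne_zero.mpr he1
    have h3 : pdz (ψ j) x z =
        (dot (ψ (j - 1) x z) (φ j x z) - 1)⁻¹ • ψ (j - 1) x z := hLat₃ j x z
    have h4 : pdz (φ (j - 1)) x z =
        -((dot (ψ (j - 1) x z) (φ j x z) - 1)⁻¹ • φ j x z) := by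
      have := hLat₄ (j - 1) x z
      rw [show j - 1 + 1 = j by ring] at this
      exact neg_eq_iff_eq_neg.mp this
    rw [hφkey, h4, h3, dot_smul_left']
    match_scalars
    · field_simp
      ring
    · ring
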